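/- arXiv:2308.11734 — 6 statements merged into one kernel-verified Lean document; each statement's English description precedes it below -/
import Mathlib

section
/- Let S be a finite non-nested set of intervals with |S| = k. Then S equals the set of pairs (d_(i), a_(i)) for 1 ≤ i ≤ k, where d_(i) denotes the i-th smallest departure of S and a_(i) denotes the i-th smallest arrival of S; that is, pairing the sorted list of departures with the sorted list of arrivals recovers exactly the members of S. -/
/-- An interval `I = (d, a)` is contained in `I' = (d', a')` if `d' ≤ d` and `a ≤ a'`. -/
def Contained (I I' : ℕ × ℕ) : Prop := I'.1 ≤ I.1 ∧ I.2 ≤ I'.2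

/-- A finite set of intervals is non-nested if no member is contained in a distinct member. -/
def NonNested (S : Finset (ℕ × ℕ)) : Prop :=
  ∀ I ∈ S, ∀ I' ∈ S, I ≠ I' → ¬ Contained I I' ∧ ¬ Contained I' I

/-- The `i`-th smallest element (1-indexed) of a finite set of naturals. -/
def nthSmallest (T : Finset ℕ) (i : ℕ) : ℕ := (T.sort (· ≤ ·)).getD (i - 1) 0

/-! Non-nestedness makes the departure map injective on `S`, and the induced map `arrivalOf S`
from departures to arrivals strictly increasing. So `S` is the graph of `arrivalOf S` over its
departures, and a strictly increasing map carries the `i`-th smallest departure to the `i`-th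
smallest element of its image, which is the set of arrivals. -/

open Finset

theorem StrictMonoOn.map_finsetSort_image {α β : Type*} [LinearOrder α] [LinearOrder β]
    [DecidableEq β] {f : α → β} {s : Finset α} (hf : StrictMonoOn f s) :
    (s.sort (· ≤ ·)).map f = (s.image f).sort (· ≤ ·) := by
  rw [← sort_val, ← sort_val, image_val_of_injOn hf.injOn]
  exact Multiset.map_sort _ _ _ _ fun _a ha _b hb => (hf.le_iff_le ha hb).symm

theorem image_nthSmallest_Icc (T : Finset ℕ) : (Icc 1 #T).image (nthSmallest T) = T := by
  ext x
  simp only [mem_image, mem_Icc, nthSmallest]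
  rw [← mem_sort (· ≤ ·), List.mem_iff_getElem]
  constructor
  · rintro ⟨i, ⟨hi1, hi⟩, rfl⟩
    exact ⟨i - 1, by rw [length_sort]; omega, (List.getD_eq_getElem _ _ _).symm⟩
  · rintro ⟨i, hi, rfl⟩
    exact ⟨i + 1, ⟨by omega, by simpa using hi⟩, List.getD_eq_getElem _ _ _⟩

theorem nthSmallest_image {f : ℕ → ℕ} {T : Finset ℕ} (hf : StrictMonoOn f T) {i : ℕ}
    (hi : i ∈ Icc 1 #T) : nthSmallest (T.image f) i = f (nthSmallest T i) := by
  have hlt : i - 1 < (T.sort (· ≤ ·)).length := by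
    rw [length_sort]; have := mem_Icc.1 hi; omega
  rw [nthSmallest, nthSmallest, ← hf.map_finsetSort_image,
    List.getD_eq_getElem _ _ (by rwa [List.length_map]), List.getD_eq_getElem _ _ hlt,
    List.getElem_map]

noncomputable def arrivalOf (S : Finset (ℕ × ℕ)) (d : ℕ) : ℕ :=
  (Function.invFunOn Prod.fst (S : Set (ℕ × ℕ)) d).2

namespace NonNested

variable {S : Finset (ℕ × ℕ)} (hS : NonNested S)
include hS

theorem injOn_fst : Set.InjOn Prod.fst (S : Set (ℕ × ℕ)) := by
  intro I hI J hJ h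
  by_contra hne
  obtain ⟨hIJ, hJI⟩ := hS I hI J hJ hne
  rcases le_total I.2 J.2 with h2 | h2
  · exact hIJ ⟨h.ge, h2⟩
  · exact hJI ⟨h.le, h2⟩

theorem snd_lt_snd {I J : ℕ × ℕ} (hI : I ∈ S) (hJ : J ∈ S) (h : I.1 < J.1) : I.2 < J.2 := by
  by_contra! h2
  exact (hS J hJ I hI (fun e => h.ne (congrArg Prod.fst e).symm)).1 ⟨h.le, h2⟩

theorem card_image_fst : #(S.image Prod.fst) = #S := card_image_of_injOn hS.injOn_fst

theorem arrivalOf_fst {I : ℕ × ℕ} (hI : I ∈ S) : arrivalOf S I.1 = I.2 := by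
  rw [arrivalOf, hS.injOn_fst.leftInvOn_invFunOn hI]

theorem eq_image_graph : S = (S.image Prod.fst).image fun d => (d, arrivalOf S d) := by
  rw [image_image]
  conv_lhs => rw [← image_id (s := S)]
  exact image_congr fun I hI => by simp [hS.arrivalOf_fst hI]

theorem image_snd_eq : S.image Prod.snd = (S.image Prod.fst).image (arrivalOf S) := by
  rw [image_image]
  exact image_congr fun I hI => (hS.arrivalOf_fst hI).symm

theorem strictMonoOn_arrivalOf : StrictMonoOn (arrivalOf S) (S.image Prod.fst : Set ℕ) := by
  simp only [coe_image, StrictMonoOn, Set.forall_mem_image]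
  intro I hI J hJ h
  rw [hS.arrivalOf_fst hI, hS.arrivalOf_fst hJ]
  exact hS.snd_lt_snd hI hJ h

end NonNested

theorem stmt2_general (S : Finset (ℕ × ℕ)) (hnn : NonNested S) :
    S = (Finset.Icc 1 S.card).image
      (fun i => (nthSmallest (S.image Prod.fst) i, nthSmallest (S.image Prod.snd) i)) := by
  set D := S.image Prod.fst
  have hcard : #D = #S := hnn.card_image_fst
  calc S = D.image fun d => (d, arrivalOf S d) := hnn.eq_image_graph
    _ = ((Icc 1 #S).image (nthSmallest D)).image fun d => (d, arrivalOf S d) := by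
      rw [← hcard, image_nthSmallest_Icc]
    _ = _ := by
      rw [image_image, hnn.image_snd_eq]
      refine image_congr fun i hi => ?_
      rw [Function.comp_apply, nthSmallest_image hnn.strictMonoOn_arrivalOf (hcard ▸ hi)]

theorem stmt2 (S : Finset (ℕ × ℕ)) (hval : ∀ I ∈ S, I.1 ≤ I.2) (hnn : NonNested S) :
    S = (Finset.Icc 1 S.card).image
      (fun i => (nthSmallest (S.image Prod.fst) i, nthSmallest (S.image Prod.snd) i)) :=
  stmt2_general S hnn
end

section
/- Let S and S' be finite non-nested sets of intervals. If the set of departures of members of S equals the set of departures of members of S', and the set of arrivals of members of S equals the set of arrivals of members of S', then S = S'. (Hence a non-nested set of intervals is uniquely determined by the pair of bit-vectors marking its departure timestamps and its arrival timestamps.) -/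
lemma nonNested_subset {S T : Finset (ℕ × ℕ)} (h : S ⊆ T) (hT : NonNested T) :
    NonNested S := fun I hI J hJ hne => hT I (h hI) J (h hJ) hne

lemma fst_injOn {S : Finset (ℕ × ℕ)} (hnn : NonNested S) :
    Set.InjOn Prod.fst (S : Set (ℕ × ℕ)) := by
  intro I hI J hJ h
  by_contra hne
  obtain ⟨h1, h2⟩ := hnn I hI J hJ hne
  rcases le_total I.2 J.2 with hc | hc
  · exact h1 ⟨h.ge, hc⟩
  · exact h2 ⟨h.le, hc⟩

lemma snd_injOn {S : Finset (ℕ × ℕ)} (hnn : NonNested S) :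
    Set.InjOn Prod.snd (S : Set (ℕ × ℕ)) := by
  intro I hI J hJ h
  by_contra hne
  obtain ⟨h1, h2⟩ := hnn I hI J hJ hne
  rcases le_total I.1 J.1 with hc | hc
  · exact h2 ⟨hc, h.ge⟩
  · exact h1 ⟨hc, h.le⟩

lemma image_erase_injOn {f : ℕ × ℕ → ℕ} {S : Finset (ℕ × ℕ)} (hf : Set.InjOn f S)
    {x : ℕ × ℕ} (hx : x ∈ S) : (S.erase x).image f = (S.image f).erase (f x) := by
  ext y
  simp only [Finset.mem_image, Finset.mem_erase]
  constructor
  · rintro ⟨a, ⟨hax, haS⟩, rfl⟩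
    exact ⟨fun h => hax (hf haS hx h), a, haS, rfl⟩
  · rintro ⟨hy, a, haS, rfl⟩
    exact ⟨a, ⟨fun h => hy (by rw [h]), haS⟩, rfl⟩

lemma min_mem {S : Finset (ℕ × ℕ)} (hS : S.Nonempty) (hnn : NonNested S) :
    ((S.image Prod.fst).min' (hS.image _), (S.image Prod.snd).min' (hS.image _)) ∈ S := by
  obtain ⟨I, hI, hI1⟩ := Finset.mem_image.mp ((S.image Prod.fst).min'_mem (hS.image _))
  obtain ⟨J, hJ, hJ2⟩ := Finset.mem_image.mp ((S.image Prod.snd).min'_mem (hS.image _))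
  have hJ1 : I.1 ≤ J.1 := by
    rw [hI1]; exact Finset.min'_le _ _ (Finset.mem_image_of_mem _ hJ)
  have hI2 : J.2 ≤ I.2 := by
    rw [hJ2]; exact Finset.min'_le _ _ (Finset.mem_image_of_mem _ hI)
  have : J = I := by
    by_contra hne
    exact (hnn J hJ I hI hne).1 ⟨hJ1, hI2⟩
  subst this
  rw [← hI1, ← hJ2]
  exact hI

lemma aux : ∀ (n : ℕ) (S S' : Finset (ℕ × ℕ)), S.card = n →
    NonNested S → NonNested S' →
    S.image Prod.fst = S'.image Prod.fst →
    S.image Prod.snd = S'.image Prod.snd → S = S' := by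
  intro n
  induction n with
  | zero =>
    intro S S' hc _ _ hD _
    rw [Finset.card_eq_zero] at hc
    subst hc
    symm
    rw [← Finset.image_eq_empty (f := Prod.fst), ← hD, Finset.image_empty]
  | succ n ih =>
    intro S S' hc hnn hnn' hD hA
    have hne : S.Nonempty := Finset.card_pos.mp (by omega)
    have hne' : S'.Nonempty := by
      rw [← Finset.image_nonempty (f := Prod.fst), ← hD]
      exact hne.image _
    set x : ℕ × ℕ := ((S.image Prod.fst).min' (hne.image _),
        (S.image Prod.snd).min' (hne.image _)) with hxdef
    have hxS : x ∈ S := min_mem hne hnn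
    have hxS' : x ∈ S' := by
      have := min_mem hne' hnn'
      convert this using 2 <;> simp [hxdef, hD, hA]
    have hDe : (S.erase x).image Prod.fst = (S'.erase x).image Prod.fst := by
      rw [image_erase_injOn (fst_injOn hnn) hxS, image_erase_injOn (fst_injOn hnn') hxS', hD]
    have hAe : (S.erase x).image Prod.snd = (S'.erase x).image Prod.snd := by
      rw [image_erase_injOn (snd_injOn hnn) hxS, image_erase_injOn (snd_injOn hnn') hxS', hA]
    have hcard : (S.erase x).card = n := by
      rw [Finset.card_erase_of_mem hxS, hc]; omega
    have key := ih (S.erase x) (S'.erase x) hcard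
      (nonNested_subset (Finset.erase_subset _ _) hnn)
      (nonNested_subset (Finset.erase_subset _ _) hnn') hDe hAe
    rw [← Finset.insert_erase hxS, ← Finset.insert_erase hxS', key]

theorem stmt3 (S S' : Finset (ℕ × ℕ))
    (hval : ∀ I ∈ S, I.1 ≤ I.2) (hval' : ∀ I ∈ S', I.1 ≤ I.2)
    (hnn : NonNested S) (hnn' : NonNested S')
    (hD : S.image Prod.fst = S'.image Prod.fst)
    (hA : S.image Prod.snd = S'.image Prod.snd) :
    S = S' := by
  exact aux S.card S S' rfl hnn hnn' hD hA
end

section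
/- Let S be a finite non-nested set of intervals and let t₁ ≤ t₂ be natural numbers. Then there exists an interval (d, a) ∈ S contained in (t₁, t₂) (i.e., with t₁ ≤ d and a ≤ t₂) if and only if |{(d, a) ∈ S : a ≤ t₂}| > |{(d, a) ∈ S : d < t₁}|. (Correctness of the rank-based test, in the insert algorithm, for whether the set already contains an interval nested inside the new interval.) -/
theorem stmt6 (S : Finset (ℕ × ℕ)) (hval : ∀ I ∈ S, I.1 ≤ I.2) (hnn : NonNested S)
    (t₁ t₂ : ℕ) (ht : t₁ ≤ t₂) :
    (∃ I ∈ S, t₁ ≤ I.1 ∧ I.2 ≤ t₂) ↔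
      (S.filter (fun I => I.1 < t₁)).card < (S.filter (fun I => I.2 ≤ t₂)).card := by
  constructor
  · rintro ⟨I₀, hI₀, hd₀, ha₀⟩
    have hsub : insert I₀ (S.filter (fun I => I.1 < t₁)) ⊆ S.filter (fun I => I.2 ≤ t₂) := by
      intro I hI
      rcases Finset.mem_insert.mp hI with rfl | hI
      · exact Finset.mem_filter.mpr ⟨hI₀, ha₀⟩
      · obtain ⟨hIS, hId⟩ := Finset.mem_filter.mp hI
        have hne : I ≠ I₀ := by
          intro h; subst h; omega
        have := (hnn I hIS I₀ hI₀ hne).2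
        unfold Contained at this
        push_neg at this
        have : I₀.2 > I.2 := this (by omega)
        refine Finset.mem_filter.mpr ⟨hIS, by omega⟩
    have hnot : I₀ ∉ S.filter (fun I => I.1 < t₁) := by
      intro h; have := (Finset.mem_filter.mp h).2; omega
    calc (S.filter (fun I => I.1 < t₁)).card
        < (insert I₀ (S.filter (fun I => I.1 < t₁))).card := by
          rw [Finset.card_insert_of_notMem hnot]; omega
      _ ≤ _ := Finset.card_le_card hsub
  · intro h
    have : ¬ (S.filter (fun I => I.2 ≤ t₂) ⊆ S.filter (fun I => I.1 < t₁)) := by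
      intro hsub
      exact absurd (Finset.card_le_card hsub) (by omega)
    obtain ⟨I, hI, hI'⟩ := Finset.not_subset.mp this
    obtain ⟨hIS, ha⟩ := Finset.mem_filter.mp hI
    refine ⟨I, hIS, ?_, ha⟩
    by_contra hd
    exact hI' (Finset.mem_filter.mpr ⟨hIS, by omega⟩)
end

section
/- Let S be a finite non-nested set of intervals and let t₁ ≤ t₂ be natural numbers such that no (d, a) ∈ S satisfies t₁ ≤ d and a ≤ t₂. Then {(d, a) ∈ S : a < t₂} ⊆ {(d, a) ∈ S : d ≤ t₁}, and consequently the number of intervals of S that contain (t₁, t₂) satisfies |{(d, a) ∈ S : d ≤ t₁ and t₂ ≤ a}| = |{(d, a) ∈ S : d ≤ t₁}| − |{(d, a) ∈ S : a < t₂}|. (Correctness of the count, in the insert algorithm, of the redundant intervals to be removed.) -/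
theorem stmt7 (S : Finset (ℕ × ℕ)) (hval : ∀ I ∈ S, I.1 ≤ I.2) (hnn : NonNested S)
    (t₁ t₂ : ℕ) (ht : t₁ ≤ t₂)
    (hnone : ∀ I ∈ S, ¬ (t₁ ≤ I.1 ∧ I.2 ≤ t₂)) :
    (S.filter (fun I => I.2 < t₂)) ⊆ (S.filter (fun I => I.1 ≤ t₁)) ∧
    (S.filter (fun I => I.1 ≤ t₁ ∧ t₂ ≤ I.2)).card =
      (S.filter (fun I => I.1 ≤ t₁)).card - (S.filter (fun I => I.2 < t₂)).card := by
  have hsub : (S.filter (fun I => I.2 < t₂)) ⊆ (S.filter (fun I => I.1 ≤ t₁)) := by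
    intro I hI
    simp only [Finset.mem_filter] at hI ⊢
    refine ⟨hI.1, ?_⟩
    by_contra h
    exact hnone I hI.1 ⟨le_of_lt (lt_of_not_ge h), le_of_lt hI.2⟩
  refine ⟨hsub, ?_⟩
  have heq : S.filter (fun I => I.1 ≤ t₁ ∧ t₂ ≤ I.2) =
      (S.filter (fun I => I.1 ≤ t₁)) \ (S.filter (fun I => I.2 < t₂)) := by
    ext I
    simp only [Finset.mem_sdiff, Finset.mem_filter]
    constructor
    · rintro ⟨hS, h1, h2⟩
      exact ⟨⟨hS, h1⟩, fun h => absurd h.2 (not_lt.mpr h2)⟩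
    · rintro ⟨⟨hS, h1⟩, h2⟩
      exact ⟨hS, h1, not_lt.mp fun h => h2 ⟨hS, h⟩⟩
  rw [heq, Finset.card_sdiff_of_subset hsub]
end

section
/- Let S be a finite non-nested set of intervals and let t₁ ≤ t₂ be natural numbers. For any (d, a) ∈ S, the interval (d, a) contains (t₁, t₂) (i.e., d ≤ t₁ and t₂ ≤ a) if and only if |{(d', a') ∈ S : a' < t₂}| < |{(d', a') ∈ S : a' ≤ a}| ≤ |{(d', a') ∈ S : d' ≤ t₁}|. In particular, the intervals of S containing (t₁, t₂) are exactly those whose rank in the order of arrivals lies in the range (|{(d', a') ∈ S : a' < t₂}|, |{(d', a') ∈ S : d' ≤ t₁}|], so they form a contiguous block in arrival order. -/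
theorem stmt8 (S : Finset (ℕ × ℕ)) (hval : ∀ I ∈ S, I.1 ≤ I.2) (hnn : NonNested S)
    (t₁ t₂ : ℕ) (ht : t₁ ≤ t₂) (I : ℕ × ℕ) (hI : I ∈ S) :
    (I.1 ≤ t₁ ∧ t₂ ≤ I.2) ↔
      ((S.filter (fun I' => I'.2 < t₂)).card < (S.filter (fun I' => I'.2 ≤ I.2)).card ∧
       (S.filter (fun I' => I'.2 ≤ I.2)).card ≤ (S.filter (fun I' => I'.1 ≤ t₁)).card) := by
  constructor
  · rintro ⟨h1, h2⟩
    constructor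
    · apply Finset.card_lt_card
      rw [Finset.ssubset_iff_of_subset]
      · exact ⟨I, Finset.mem_filter.2 ⟨hI, le_refl _⟩,
          fun h => absurd (Finset.mem_filter.1 h).2 (not_lt.2 h2)⟩
      · intro J hJ
        rw [Finset.mem_filter] at hJ ⊢
        exact ⟨hJ.1, le_trans (le_of_lt hJ.2) h2⟩
    · apply Finset.card_le_card
      intro J hJ
      rw [Finset.mem_filter] at hJ ⊢
      refine ⟨hJ.1, ?_⟩
      by_cases hJI : J = I
      · subst hJI; exact h1
      · have := (hnn J hJ.1 I hI hJI).1
        simp only [Contained, not_and, not_le] at this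
        by_contra hcon
        push_neg at hcon
        exact absurd hJ.2 (not_le.2 (this (le_trans h1 (le_of_lt hcon))))
  · rintro ⟨hc1, hc2⟩
    constructor
    · by_contra hd
      push_neg at hd
      have hsub : S.filter (fun I' => I'.1 ≤ t₁) ⊂ S.filter (fun I' => I'.2 ≤ I.2) := by
        rw [Finset.ssubset_iff_of_subset]
        · refine ⟨I, Finset.mem_filter.2 ⟨hI, le_refl _⟩,
            fun h => absurd (Finset.mem_filter.1 h).2 (not_le.2 hd)⟩
        · intro J hJ
          rw [Finset.mem_filter] at hJ ⊢
          refine ⟨hJ.1, ?_⟩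
          have hJI : J ≠ I := fun h => absurd hJ.2 (by rw [h]; exact not_le.2 hd)
          have := (hnn I hI J hJ.1 (Ne.symm hJI)).1
          simp only [Contained, not_and, not_le] at this
          exact le_of_lt (this (le_trans hJ.2 (le_of_lt hd)))
      exact absurd hc2 (not_le.2 (Finset.card_lt_card hsub))
    · by_contra ha
      push_neg at ha
      have : S.filter (fun I' => I'.2 ≤ I.2) ⊆ S.filter (fun I' => I'.2 < t₂) := by
        intro J hJ
        rw [Finset.mem_filter] at hJ ⊢
        exact ⟨hJ.1, lt_of_le_of_lt hJ.2 ha⟩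
      exact absurd hc1 (not_lt.2 (Finset.card_le_card this))
end

section
/- Let S be a finite non-nested set of intervals and let J be an interval such that no member of S is contained in J. Let S' = (S \ {I ∈ S : J is contained in I}) ∪ {J}, obtained by removing from S all intervals that contain J and then adding J. Then S' is non-nested, and S' equals the set of minimal elements of S ∪ {J} under containment. (Correctness and invariant preservation of the insert operation.) -/
instance (I I' : ℕ × ℕ) : Decidable (Contained I I') :=
  inferInstanceAs (Decidable (I'.1 ≤ I.1 ∧ I.2 ≤ I'.2))

open Classical in
/-- The set of minimal elements of a finite set of intervals under containment:
those members `I` such that the only member contained in `I` is `I` itself. -/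
noncomputable def MinimalElems (T : Finset (ℕ × ℕ)) : Finset (ℕ × ℕ) :=
  T.filter (fun I => ∀ I' ∈ T, Contained I' I → I' = I)

theorem stmt10 (S : Finset (ℕ × ℕ)) (hval : ∀ I ∈ S, I.1 ≤ I.2) (hnn : NonNested S)
    (J : ℕ × ℕ) (hJ : J.1 ≤ J.2) (h : ∀ I ∈ S, ¬ Contained I J)
    (S' : Finset (ℕ × ℕ))
    (hS' : S' = insert J (S.filter (fun I => ¬ Contained J I))) :
    NonNested S' ∧ S' = MinimalElems (insert J S) := by
  subst hS'
  have hCrefl : ∀ I : ℕ × ℕ, Contained I I := fun I => ⟨le_refl _, le_refl _⟩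
  constructor
  · intro I hI I' hI' hne
    simp only [Finset.mem_insert, Finset.mem_filter] at hI hI'
    rcases hI with rfl | ⟨hIS, hIJ⟩
    · rcases hI' with rfl | ⟨hI'S, hI'J⟩
      · exact absurd rfl hne
      · exact ⟨fun hc => hI'J hc, h I' hI'S⟩
    · rcases hI' with rfl | ⟨hI'S, hI'J⟩
      · exact ⟨h I hIS, fun hc => hIJ hc⟩
      · exact hnn I hIS I' hI'S hne
  · ext I
    simp only [MinimalElems, Finset.mem_insert, Finset.mem_filter]
    constructor
    · rintro (rfl | ⟨hIS, hIJ⟩)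
      · refine ⟨Or.inl rfl, ?_⟩
        rintro I' (rfl | hI'S) hc
        · rfl
        · exact absurd hc (h I' hI'S)
      · refine ⟨Or.inr hIS, ?_⟩
        rintro I' (rfl | hI'S) hc
        · exact absurd hc hIJ
        · by_contra hne
          exact (hnn I' hI'S I hIS hne).1 hc
    · rintro ⟨(rfl | hIS), hmin⟩
      · exact Or.inl rfl
      · refine Or.inr ⟨hIS, fun hc => ?_⟩
        have := hmin J (Or.inl rfl) hc
        exact h I hIS (this ▸ hCrefl I)
end
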